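/- arXiv:1611.04143 — 2 statements merged into one kernel-verified Lean document; each statement's English description precedes it below -/
import Mathlib

section
/- Let V be a 3-dimensional real vector space with a nondegenerate symmetric bilinear form g, and let v ∈ V. Define the symmetric bilinear form T(a,b) = q(⟨v,a⟩⟨v,b⟩ - (1/2)⟨v,v⟩ g(a,b)) for a constant q. Then, viewing T as an endomorphism via g (i.e., raising an index), the identity tr(T²) - (1/3)(tr T)² = (2/3) q² ⟨v,v⟩² holds. -/
open Matrix

private lemma mul_vecMulVec' {n : Type*} [Fintype n] (A : Matrix n n ℝ) (u w : n → ℝ) :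
    A * vecMulVec u w = vecMulVec (A *ᵥ u) w := by
  ext i j
  simp only [Matrix.mul_apply, vecMulVec_apply, Matrix.mulVec, dotProduct,
    Finset.sum_mul]
  exact Finset.sum_congr rfl fun k _ => by ring

private lemma trace_vecMulVec' {n : Type*} [Fintype n] (u w : n → ℝ) :
    (vecMulVec u w).trace = u ⬝ᵥ w := by
  simp [Matrix.trace, Matrix.diag, vecMulVec_apply, dotProduct]

private lemma vecMulVec_mul_self {n : Type*} [Fintype n] (u w : n → ℝ) :
    vecMulVec u w * vecMulVec u w = (w ⬝ᵥ u) • vecMulVec u w := by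
  ext i j
  simp only [Matrix.mul_apply, vecMulVec_apply, Matrix.smul_apply, dotProduct,
    smul_eq_mul]
  calc ∑ k, u i * w k * (u k * w j)
      = ∑ k, (w k * u k) * (u i * w j) := Finset.sum_congr rfl fun k _ => by ring
    _ = (∑ k, w k * u k) * (u i * w j) := by rw [Finset.sum_mul]

/-- For a 3-dimensional real vector space with nondegenerate symmetric
bilinear form `g` (in components, a symmetric invertible 3×3 matrix), `v` a vector,
and `T(a,b) = q(⟨v,a⟩⟨v,b⟩ - (1/2)⟨v,v⟩ g(a,b))`, the g-raised endomorphism of `T`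
satisfies `tr(T²) - (1/3)(tr T)² = (2/3) q² ⟨v,v⟩²`. -/
theorem stmt0 (g T : Matrix (Fin 3) (Fin 3) ℝ) (hg : g.IsSymm) (hdet : IsUnit g.det)
    (v : Fin 3 → ℝ) (q : ℝ)
    (hT : ∀ a b, T a b =
      q * ((g *ᵥ v) a * (g *ᵥ v) b - (1/2) * (v ⬝ᵥ (g *ᵥ v)) * g a b)) :
    ((g⁻¹ * T) ^ 2).trace - (1/3) * ((g⁻¹ * T).trace) ^ 2
      = (2/3) * q ^ 2 * (v ⬝ᵥ (g *ᵥ v)) ^ 2 := by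
  set w := g *ᵥ v with hw
  set s := v ⬝ᵥ w with hs
  have hinv : g⁻¹ * g = 1 := nonsing_inv_mul g hdet
  have hgv : g⁻¹ *ᵥ w = v := by
    rw [hw, mulVec_mulVec, hinv, one_mulVec]
  have hTm : T = q • vecMulVec w w - (q * s / 2) • g := by
    ext i j
    simp only [Matrix.sub_apply, Matrix.smul_apply, vecMulVec_apply, smul_eq_mul, hT]
    ring
  have hA : g⁻¹ * T = q • vecMulVec v w - (q * s / 2) • 1 := by
    rw [hTm, Matrix.mul_sub, Matrix.mul_smul, Matrix.mul_smul, hinv, mul_vecMulVec', hgv]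
  have hwv : w ⬝ᵥ v = s := by rw [hs, dotProduct_comm]
  have htr : (g⁻¹ * T).trace = q * s - 3 * (q * s / 2) := by
    rw [hA, trace_sub, trace_smul, trace_smul, trace_vecMulVec', trace_one, ← hs]
    simp [Fintype.card_fin]
    ring
  have htr2 : ((g⁻¹ * T) ^ 2).trace
      = q ^ 2 * (s * s) - 2 * (q * (q * s / 2)) * s + (q * s / 2) ^ 2 * 3 := by
    rw [hA]
    have expand : (q • vecMulVec v w - (q * s / 2) • 1) ^ 2
        = (q * q) • (vecMulVec v w * vecMulVec v w)
          - (q * (q * s / 2)) • vecMulVec v w - (q * (q * s / 2)) • vecMulVec v w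
          + ((q * s / 2) * (q * s / 2)) • (1 : Matrix (Fin 3) (Fin 3) ℝ) := by
      rw [sq]
      rw [Matrix.sub_mul, Matrix.mul_sub, Matrix.mul_sub]
      rw [smul_mul_smul_comm, smul_mul_smul_comm, smul_mul_smul_comm, smul_mul_smul_comm]
      simp only [Matrix.mul_one, Matrix.one_mul]
      rw [mul_comm (q * s / 2) q]
      abel
    rw [expand, vecMulVec_mul_self, hwv]
    simp only [trace_add, trace_sub, trace_smul, trace_vecMulVec', trace_one, ← hs,
      smul_eq_mul, Fintype.card_fin]
    push_cast
    ring
  rw [htr, htr2]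
  ring
end

section
/- For the static metric g = -f(r) dt² + f(r)⁻¹ dr² + r² dθ² with f(r) = -M - (Q²/2) ln r + r²/ℓ² on the region where f > 0, the Einstein tensor satisfies G_{ab} + Λ g_{ab} = q (F_{ac}F_b{}^c - (1/4) g_{ab} F_{de}F^{de}) with Λ = -1/ℓ², where F = (Q/√(2q)) r⁻¹ dt ∧ dr. -/
open Matrix

noncomputable section

/-- Partial derivative of a function of coordinates `p : Fin 3 → ℝ`
in the `i`-th coordinate direction. -/
def pd (h : (Fin 3 → ℝ) → ℝ) (i : Fin 3) (p : Fin 3 → ℝ) : ℝ :=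
  fderiv ℝ h p (Pi.single i 1)

/-- Christoffel symbols `Γ^a_{bc}` of the Levi-Civita connection of a metric given
in coordinates by the matrix-valued function `G`. -/
def christoffel (G : (Fin 3 → ℝ) → Matrix (Fin 3) (Fin 3) ℝ)
    (p : Fin 3 → ℝ) (a b c : Fin 3) : ℝ :=
  (1/2) * ∑ d, (G p)⁻¹ a d *
    (pd (fun x => G x d c) b p + pd (fun x => G x d b) c p - pd (fun x => G x b c) d p)

/-- Ricci tensor of the metric `G` in coordinates. -/
def ricci (G : (Fin 3 → ℝ) → Matrix (Fin 3) (Fin 3) ℝ)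
    (p : Fin 3 → ℝ) (a b : Fin 3) : ℝ :=
  (∑ c, pd (fun x => christoffel G x c a b) c p)
    - (∑ c, pd (fun x => christoffel G x c c b) a p)
    + (∑ c, ∑ d, christoffel G p c c d * christoffel G p d a b)
    - (∑ c, ∑ d, christoffel G p c a d * christoffel G p d c b)

/-- Scalar curvature of the metric `G` in coordinates. -/
def scalarCurv (G : (Fin 3 → ℝ) → Matrix (Fin 3) (Fin 3) ℝ) (p : Fin 3 → ℝ) : ℝ :=
  ∑ a, ∑ b, (G p)⁻¹ a b * ricci G p a b

/-- Einstein tensor `G_{ab} = R_{ab} - (1/2) R g_{ab}` of the metric `G`. -/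
def einstein (G : (Fin 3 → ℝ) → Matrix (Fin 3) (Fin 3) ℝ)
    (p : Fin 3 → ℝ) (a b : Fin 3) : ℝ :=
  ricci G p a b - (1/2) * scalarCurv G p * G p a b

/-- The BTZ metric function `f(r) = -M - (Q²/2) ln r + r²/ℓ²`. -/
def btzF (M Q ℓ : ℝ) (r : ℝ) : ℝ := -M - Q ^ 2 / 2 * Real.log r + r ^ 2 / ℓ ^ 2

/-- The static metric `g = -f(r) dt² + f(r)⁻¹ dr² + r² dθ²` in coordinates
`(t,r,θ) = (p 0, p 1, p 2)`. -/
def btzMetric (M Q ℓ : ℝ) (p : Fin 3 → ℝ) : Matrix (Fin 3) (Fin 3) ℝ :=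
  !![-(btzF M Q ℓ (p 1)), 0, 0; 0, (btzF M Q ℓ (p 1))⁻¹, 0; 0, 0, (p 1) ^ 2]

/-- The electromagnetic field `F = (Q/√(2q)) r⁻¹ dt ∧ dr` in the same coordinates. -/
def btzEM (Q q : ℝ) (p : Fin 3 → ℝ) : Matrix (Fin 3) (Fin 3) ℝ :=
  !![0, Q / Real.sqrt (2 * q) * (p 1)⁻¹, 0;
     -(Q / Real.sqrt (2 * q) * (p 1)⁻¹), 0, 0; 0, 0, 0]

/-! For any metric `-f dt² + f⁻¹ dr² + r² dθ²` the Christoffel symbols depend on `r` alone, and a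
direct computation gives the Einstein tensor `diag(-f f'/(2r), f'/(2rf), r² f''/2)`, while a field
`E(r) dt ∧ dr` has stress tensor `(E²/2) diag(f, -1/f, r²)`. For the BTZ function,
`f' = -Q²/(2r) + 2r/ℓ²` and `f'' = Q²/(2r²) + 2/ℓ²`, so adding `-g/ℓ²` to the Einstein tensor leaves
`(Q²/(4r²)) diag(f, -1/f, r²)`, which is `q` times the stress tensor of `E = Q/(√(2q) r)`. -/

open Filter Topology

lemma pd_comp_apply {h : ℝ → ℝ} {h' : ℝ} {p : Fin 3 → ℝ} {j : Fin 3}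
    (hh : HasDerivAt h h' (p j)) (i : Fin 3) :
    pd (fun x => h (x j)) i p = if i = j then h' else 0 := by
  have hc : HasFDerivAt (fun x : Fin 3 → ℝ => h (x j))
      ((ContinuousLinearMap.smulRight (1 : ℝ →L[ℝ] ℝ) h').comp (ContinuousLinearMap.proj j)) p :=
    hh.hasFDerivAt.comp p (hasFDerivAt_apply j p)
  rw [pd, hc.fderiv]
  rcases eq_or_ne i j with rfl | hij
  · simp
  · simp [hij]

lemma pd_congr {h₁ h₂ : (Fin 3 → ℝ) → ℝ} {p : Fin 3 → ℝ} (he : h₁ =ᶠ[𝓝 p] h₂) (i : Fin 3) :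
    pd h₁ i p = pd h₂ i p := by
  rw [pd, pd, he.fderiv_eq]

def staticMetric (f : ℝ → ℝ) (p : Fin 3 → ℝ) : Matrix (Fin 3) (Fin 3) ℝ :=
  !![-(f (p 1)), 0, 0; 0, (f (p 1))⁻¹, 0; 0, 0, (p 1) ^ 2]

-- `Γ^c_{ab} = staticChristoffel (f r) (f' r) r c a b`
def staticChristoffel (F F' r : ℝ) : Fin 3 → Matrix (Fin 3) (Fin 3) ℝ :=
  ![!![0, F' / (2 * F), 0; F' / (2 * F), 0, 0; 0, 0, 0],
    !![F * F' / 2, 0, 0; 0, -(F' / (2 * F)), 0; 0, 0, -(r * F)],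
    !![0, 0, 0; 0, 0, r⁻¹; 0, r⁻¹, 0]]

def staticChristoffelDeriv (F F' F'' r : ℝ) : Fin 3 → Matrix (Fin 3) (Fin 3) ℝ :=
  ![!![0, (F'' * F - F' ^ 2) / (2 * F ^ 2), 0; (F'' * F - F' ^ 2) / (2 * F ^ 2), 0, 0; 0, 0, 0],
    !![(F' ^ 2 + F * F'') / 2, 0, 0; 0, -((F'' * F - F' ^ 2) / (2 * F ^ 2)), 0;
      0, 0, -(F + r * F')],
    !![0, 0, 0; 0, 0, -(r ^ 2)⁻¹; 0, -(r ^ 2)⁻¹, 0]]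

section StaticMetric

variable {f f' : ℝ → ℝ} {f'' : ℝ} {p : Fin 3 → ℝ}

lemma staticMetric_inv (hf : f (p 1) ≠ 0) (hr : p 1 ≠ 0) :
    (staticMetric f p)⁻¹ = !![-(f (p 1))⁻¹, 0, 0; 0, f (p 1), 0; 0, 0, ((p 1) ^ 2)⁻¹] := by
  apply Matrix.inv_eq_right_inv
  ext i j
  fin_cases i <;> fin_cases j <;>
    simp [staticMetric, Matrix.mul_apply, Fin.sum_univ_three, hf, hr]

lemma pd_staticMetric (hf : HasDerivAt f (f' (p 1)) (p 1)) (hf0 : f (p 1) ≠ 0) (a b i : Fin 3) :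
    pd (fun x => staticMetric f x a b) i p = if i = 1 then
      !![-(f' (p 1)), 0, 0; 0, -(f' (p 1)) / f (p 1) ^ 2, 0; 0, 0, 2 * p 1] a b else 0 := by
  have hsq : HasDerivAt (fun s : ℝ => s ^ 2) (2 * p 1) (p 1) := by
    simpa using hasDerivAt_pow 2 (p 1)
  fin_cases a <;> fin_cases b <;>
    first
      | exact pd_comp_apply hf.neg i
      | exact pd_comp_apply (hf.inv hf0) i
      | exact pd_comp_apply hsq i
      | exact pd_comp_apply (hasDerivAt_const (p 1) (0 : ℝ)) i

lemma christoffel_staticMetric (hf : HasDerivAt f (f' (p 1)) (p 1)) (hf0 : f (p 1) ≠ 0)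
    (hr : p 1 ≠ 0) (a b c : Fin 3) :
    christoffel (staticMetric f) p a b c = staticChristoffel (f (p 1)) (f' (p 1)) (p 1) a b c := by
  fin_cases a <;> fin_cases b <;> fin_cases c <;>
    (simp only [christoffel, staticMetric_inv hf0 hr, Fin.sum_univ_three, pd_staticMetric hf hf0]
     norm_num [staticChristoffel, Fin.ext_iff, Matrix.cons_val_two, Matrix.vecHead,
       Matrix.vecTail]) <;>
    field_simp

lemma hasDerivAt_staticChristoffel {r : ℝ} (hf : HasDerivAt f (f' r) r) (hf' : HasDerivAt f' f'' r)
    (hf0 : f r ≠ 0) (hr : r ≠ 0) (a b c : Fin 3) :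
    HasDerivAt (fun s => staticChristoffel (f s) (f' s) s a b c)
      (staticChristoffelDeriv (f r) (f' r) f'' r a b c) r := by
  have hquot : HasDerivAt (fun s => f' s / (2 * f s))
      ((f'' * f r - f' r ^ 2) / (2 * f r ^ 2)) r := by
    refine (hf'.div (hf.const_mul 2) (mul_ne_zero two_ne_zero hf0)).congr_deriv ?_
    field_simp
  have hprod : HasDerivAt (fun s => f s * f' s / 2) ((f' r ^ 2 + f r * f'') / 2) r := by
    refine ((hf.mul hf').div_const 2).congr_deriv ?_
    ring
  have hlin : HasDerivAt (fun s => -(s * f s)) (-(f r + r * f' r)) r := by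
    refine ((hasDerivAt_id r).mul hf).neg.congr_deriv ?_
    simp
  fin_cases a <;> fin_cases b <;> fin_cases c <;>
    simp only [staticChristoffel, staticChristoffelDeriv, Matrix.cons_val', Matrix.cons_val_zero,
      Matrix.cons_val_one, Matrix.head_cons, Matrix.empty_val', Matrix.cons_val_fin_one,
      Matrix.of_apply, Matrix.cons_val_two, Matrix.tail_cons, Fin.zero_eta, Fin.mk_one,
      Fin.reduceFinMk, Fin.isValue] <;>
    first
      | exact hasDerivAt_const r 0
      | exact hquot
      | exact hquot.neg
      | exact hprod
      | exact hlin
      | exact hasDerivAt_inv hr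

lemma pd_christoffel_staticMetric (hf : ∀ᶠ s in 𝓝 (p 1), HasDerivAt f (f' s) s)
    (hf' : HasDerivAt f' f'' (p 1)) (hf0 : f (p 1) ≠ 0) (hr : p 1 ≠ 0) (i a b c : Fin 3) :
    pd (fun x => christoffel (staticMetric f) x a b c) i p =
      if i = 1 then staticChristoffelDeriv (f (p 1)) (f' (p 1)) f'' (p 1) a b c else 0 := by
  have hnear : ∀ᶠ s in 𝓝 (p 1), HasDerivAt f (f' s) s ∧ f s ≠ 0 ∧ s ≠ 0 :=
    hf.and ((hf.self_of_nhds.continuousAt.eventually_ne hf0).and (eventually_ne_nhds hr))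
  have hchris : (fun x => christoffel (staticMetric f) x a b c)
      =ᶠ[𝓝 p] fun x => staticChristoffel (f (x 1)) (f' (x 1)) (x 1) a b c :=
    ((continuous_apply 1).continuousAt.tendsto.eventually hnear).mono fun x hx =>
      christoffel_staticMetric hx.1 hx.2.1 hx.2.2 a b c
  rw [pd_congr hchris,
    pd_comp_apply (hasDerivAt_staticChristoffel hf.self_of_nhds hf' hf0 hr a b c)]

lemma ricci_staticMetric (hf : ∀ᶠ s in 𝓝 (p 1), HasDerivAt f (f' s) s)
    (hf' : HasDerivAt f' f'' (p 1)) (hf0 : f (p 1) ≠ 0) (hr : p 1 ≠ 0) (a b : Fin 3) :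
    ricci (staticMetric f) p a b =
      !![f (p 1) * (f'' / 2 + f' (p 1) / (2 * p 1)), 0, 0;
        0, -((f'' / 2 + f' (p 1) / (2 * p 1)) / f (p 1)), 0;
        0, 0, -(p 1 * f' (p 1))] a b := by
  fin_cases a <;> fin_cases b <;>
    (simp only [ricci, Fin.sum_univ_three, pd_christoffel_staticMetric hf hf' hf0 hr,
       christoffel_staticMetric hf.self_of_nhds hf0 hr]
     norm_num [staticChristoffel, staticChristoffelDeriv, Fin.ext_iff, Matrix.cons_val_two,
       Matrix.vecHead, Matrix.vecTail]) <;>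
    field_simp <;> ring

lemma scalarCurv_staticMetric (hf : ∀ᶠ s in 𝓝 (p 1), HasDerivAt f (f' s) s)
    (hf' : HasDerivAt f' f'' (p 1)) (hf0 : f (p 1) ≠ 0) (hr : p 1 ≠ 0) :
    scalarCurv (staticMetric f) p = -(f'' + 2 * f' (p 1) / p 1) := by
  simp only [scalarCurv, Fin.sum_univ_three, staticMetric_inv hf0 hr,
    ricci_staticMetric hf hf' hf0 hr]
  norm_num [Matrix.cons_val_two, Matrix.vecHead, Matrix.vecTail]
  field_simp
  ring

lemma einstein_staticMetric (hf : ∀ᶠ s in 𝓝 (p 1), HasDerivAt f (f' s) s)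
    (hf' : HasDerivAt f' f'' (p 1)) (hf0 : f (p 1) ≠ 0) (hr : p 1 ≠ 0) (a b : Fin 3) :
    einstein (staticMetric f) p a b =
      !![-(f (p 1) * f' (p 1) / (2 * p 1)), 0, 0;
        0, f' (p 1) / (2 * p 1 * f (p 1)), 0;
        0, 0, p 1 ^ 2 * f'' / 2] a b := by
  fin_cases a <;> fin_cases b <;>
    (simp only [einstein, ricci_staticMetric hf hf' hf0 hr, scalarCurv_staticMetric hf hf' hf0 hr]
     norm_num [staticMetric, Matrix.cons_val_two, Matrix.vecHead, Matrix.vecTail]) <;>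
    field_simp <;> ring

def radialElectricField (E : ℝ → ℝ) (p : Fin 3 → ℝ) : Matrix (Fin 3) (Fin 3) ℝ :=
  !![0, E (p 1), 0; -E (p 1), 0, 0; 0, 0, 0]

def maxwellStress {ι : Type*} [Fintype ι] [DecidableEq ι] (g F : Matrix ι ι ℝ) (a b : ι) : ℝ :=
  (∑ c, ∑ d, F a c * g⁻¹ c d * F b d)
    - (1 / 4) * g a b * (∑ c, ∑ d, ∑ e, ∑ f, F c d * g⁻¹ c e * g⁻¹ d f * F e f)

lemma maxwellStress_staticMetric_radialElectricField (E : ℝ → ℝ) (hf0 : f (p 1) ≠ 0)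
    (hr : p 1 ≠ 0) (a b : Fin 3) :
    maxwellStress (staticMetric f p) (radialElectricField E p) a b =
      E (p 1) ^ 2 / 2 * !![f (p 1), 0, 0; 0, -(f (p 1))⁻¹, 0; 0, 0, p 1 ^ 2] a b := by
  fin_cases a <;> fin_cases b <;>
    (simp only [maxwellStress, staticMetric_inv hf0 hr, Fin.sum_univ_three]
     norm_num [staticMetric, radialElectricField, Matrix.cons_val_two, Matrix.vecHead,
       Matrix.vecTail]) <;>
    field_simp <;> ring

end StaticMetric

def btzF' (Q ℓ r : ℝ) : ℝ := -(Q ^ 2 / 2) * r⁻¹ + 2 * r / ℓ ^ 2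

lemma hasDerivAt_btzF (M Q ℓ : ℝ) {r : ℝ} (hr : 0 < r) :
    HasDerivAt (btzF M Q ℓ) (btzF' Q ℓ r) r := by
  refine (((hasDerivAt_const r (-M)).sub ((Real.hasDerivAt_log hr.ne').const_mul (Q ^ 2 / 2))).add
    ((hasDerivAt_pow 2 r).div_const (ℓ ^ 2))).congr_deriv ?_
  simp [btzF']

lemma hasDerivAt_btzF' (Q ℓ : ℝ) {r : ℝ} (hr : r ≠ 0) :
    HasDerivAt (btzF' Q ℓ) (Q ^ 2 / 2 * (r ^ 2)⁻¹ + 2 / ℓ ^ 2) r := by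
  refine (((hasDerivAt_inv hr).const_mul (-(Q ^ 2 / 2))).add
    (((hasDerivAt_id r).const_mul 2).div_const (ℓ ^ 2))).congr_deriv ?_
  simp

lemma btzMetric_eq_staticMetric (M Q ℓ : ℝ) : btzMetric M Q ℓ = staticMetric (btzF M Q ℓ) := rfl

lemma btzEM_eq_radialElectricField (Q q : ℝ) :
    btzEM Q q = radialElectricField fun r => Q / Real.sqrt (2 * q) * r⁻¹ := rfl

theorem stmt18_general (M Q ℓ q : ℝ) (hq : 0 < q) :
    ∀ p : Fin 3 → ℝ, 0 < p 1 → 0 < btzF M Q ℓ (p 1) → ∀ a b : Fin 3,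
      einstein (btzMetric M Q ℓ) p a b + (-(1 / ℓ ^ 2)) * btzMetric M Q ℓ p a b
        = q * ((∑ c, ∑ d, btzEM Q q p a c * (btzMetric M Q ℓ p)⁻¹ c d * btzEM Q q p b d)
          - (1/4) * btzMetric M Q ℓ p a b *
            (∑ c, ∑ d, ∑ e, ∑ f, btzEM Q q p c d * (btzMetric M Q ℓ p)⁻¹ c e
              * (btzMetric M Q ℓ p)⁻¹ d f * btzEM Q q p e f)) := by
  intro p hr hf a b
  have hderiv : ∀ᶠ s in 𝓝 (p 1), HasDerivAt (btzF M Q ℓ) (btzF' Q ℓ s) s :=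
    eventually_of_mem (Ioi_mem_nhds hr) fun s hs => hasDerivAt_btzF M Q ℓ hs
  have hcharge : q * (Q / Real.sqrt (2 * q) * (p 1)⁻¹) ^ 2 / 2 = Q ^ 2 / (4 * p 1 ^ 2) := by
    rw [mul_pow, div_pow, Real.sq_sqrt (by positivity)]
    field_simp
    ring
  rw [btzMetric_eq_staticMetric, btzEM_eq_radialElectricField]
  change _ = q * maxwellStress _ _ a b
  rw [einstein_staticMetric hderiv (hasDerivAt_btzF' Q ℓ hr.ne') hf.ne' hr.ne',
    maxwellStress_staticMetric_radialElectricField _ hf.ne' hr.ne', ← mul_assoc, mul_div_assoc',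
    hcharge]
  fin_cases a <;> fin_cases b <;>
    norm_num [staticMetric, btzF', Matrix.cons_val_two, Matrix.vecHead, Matrix.vecTail] <;>
    field_simp <;> ring

/-- The static metric `g = -f dt² + f⁻¹ dr² + r² dθ²` with
`f(r) = -M - (Q²/2) ln r + r²/ℓ²` and the field `F = (Q/√(2q)) r⁻¹ dt ∧ dr` satisfy
the Einstein–Maxwell equations
`G_{ab} + Λ g_{ab} = q (F_{ac}F_b{}^c - (1/4) g_{ab} F_{de}F^{de})` with `Λ = -1/ℓ²`
on the region `r > 0`, `f(r) > 0` (the static charged BTZ black hole). -/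
theorem stmt18 (M Q ℓ q : ℝ) (hM : 0 < M) (hQ : 0 < Q) (hℓ : 0 < ℓ) (hq : 0 < q) :
    ∀ p : Fin 3 → ℝ, 0 < p 1 → 0 < btzF M Q ℓ (p 1) → ∀ a b : Fin 3,
      einstein (btzMetric M Q ℓ) p a b + (-(1 / ℓ ^ 2)) * btzMetric M Q ℓ p a b
        = q * ((∑ c, ∑ d, btzEM Q q p a c * (btzMetric M Q ℓ p)⁻¹ c d * btzEM Q q p b d)
          - (1/4) * btzMetric M Q ℓ p a b *
            (∑ c, ∑ d, ∑ e, ∑ f, btzEM Q q p c d * (btzMetric M Q ℓ p)⁻¹ c e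
              * (btzMetric M Q ℓ p)⁻¹ d f * btzEM Q q p e f)) :=
  stmt18_general M Q ℓ q hq

end
end
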